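/- arXiv:1912.13493 — 8 statements merged into one kernel-verified Lean document; each statement's English description precedes it below -/
import Mathlib

section
/- For T > (N+2)c with c ≥ 0, the vector y with y_i = (T-c)/(N+1) for i = 1,...,N and y_{N+1} = (T+Nc)/(N+1) minimizes the function A(y) = (1/2)∑_{i=1}^{N+1} y_i² + c∑_{i=1}^{N} y_i over all y ∈ ℝ^{N+1} satisfying ∑_{i=1}^{N+1} y_i = T, y_1 ≥ 0, and y_i ≥ c for i = 2,...,N+1. -/
/-!
Adding `c` to each of the first `N` coordinates completes the square: the objective becomes
`½ ∑ wᵢ² - N c² / 2` for the shifted vector `w = ageShift N c z`, whose coordinates sum to `T + N c`. By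
Cauchy–Schwarz, `∑ wᵢ²` is minimal when `w` is constant, and the shift of the proposed `y` is the
constant vector `(T + N c) / (N + 1)`.
-/

open Finset

theorem card_mul_sq_le_sum_sq {ι : Type*} (s : Finset ι) (v : ι → ℝ) (a : ℝ)
    (h : ∑ i ∈ s, v i = #s * a) : #s * a ^ 2 ≤ ∑ i ∈ s, v i ^ 2 := by
  have hcs := sq_sum_le_card_mul_sum_sq (s := s) (f := v)
  rw [h] at hcs
  rcases (Nat.cast_nonneg (α := ℝ) #s).eq_or_lt with hs | hs
  · rw [← hs, zero_mul]
    exact sum_nonneg fun i _ => sq_nonneg (v i)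
  · exact le_of_mul_le_mul_left (by linarith) hs

def ageShift (N : ℕ) (c : ℝ) (z : ℕ → ℝ) (i : ℕ) : ℝ := z i + if i ≤ N then c else 0

section ageShift

variable (N : ℕ) (c : ℝ) (z : ℕ → ℝ)

theorem sum_Icc_ageShift (f : ℝ → ℝ) :
    ∑ i ∈ Icc 1 (N + 1), f (ageShift N c z i) = ∑ i ∈ Icc 1 N, f (z i + c) + f (z (N + 1)) := by
  rw [sum_Icc_succ_top (by omega)]
  congr 1
  · refine sum_congr rfl fun i hi => ?_
    rw [ageShift, if_pos (mem_Icc.mp hi).2]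
  · simp [ageShift]

theorem sum_ageShift :
    ∑ i ∈ Icc 1 (N + 1), ageShift N c z i = ∑ i ∈ Icc 1 (N + 1), z i + N * c := by
  refine (sum_Icc_ageShift N c z id).trans ?_
  simp only [id, sum_Icc_succ_top (show 1 ≤ N + 1 by omega), sum_add_distrib, sum_const,
    Nat.card_Icc, add_tsub_cancel_right, nsmul_eq_mul]
  ring

theorem objective_eq_sum_sq_ageShift :
    1 / 2 * ∑ i ∈ Icc 1 (N + 1), z i ^ 2 + c * ∑ i ∈ Icc 1 N, z i =
      1 / 2 * ∑ i ∈ Icc 1 (N + 1), ageShift N c z i ^ 2 - N * c ^ 2 / 2 := by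
  have hexpand : ∀ i, (z i + c) ^ 2 = z i ^ 2 + 2 * c * z i + c ^ 2 := fun i => by ring
  rw [sum_Icc_ageShift N c z (· ^ 2), sum_Icc_succ_top (by omega)]
  simp only [hexpand, sum_add_distrib, ← mul_sum, sum_const, Nat.card_Icc, add_tsub_cancel_right,
    nsmul_eq_mul]
  ring

theorem ageShift_eq_of_eq (a : ℝ) (hz : ∀ i ∈ Icc 1 N, z i = a - c) (hzlast : z (N + 1) = a) :
    ∀ i ∈ Icc 1 (N + 1), ageShift N c z i = a := by
  intro i hi
  obtain ⟨hi1, hiN⟩ := mem_Icc.mp hi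
  rcases hiN.lt_or_eq with hiN | rfl
  · rw [ageShift, if_pos (by omega), hz i (mem_Icc.mpr ⟨hi1, by omega⟩), sub_add_cancel]
  · simp [ageShift, hzlast]

end ageShift

/-- For T > (N+2)c with c ≥ 0, the vector y with y_i = (T-c)/(N+1) for
i = 1,...,N and y_{N+1} = (T+Nc)/(N+1) minimizes
A(y) = (1/2)∑_{i=1}^{N+1} y_i² + c∑_{i=1}^{N} y_i over all feasible y. -/
theorem stmt_0 (N : ℕ) (hN : 1 ≤ N) (T c : ℝ) (hc : 0 ≤ c)
    (hT : ((N : ℝ) + 2) * c < T)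
    (y : ℕ → ℝ)
    (hy : ∀ i ∈ Icc 1 N, y i = (T - c) / ((N : ℝ) + 1))
    (hylast : y (N + 1) = (T + (N : ℝ) * c) / ((N : ℝ) + 1)) :
    ((∑ i ∈ Icc 1 (N + 1), y i) = T ∧ 0 ≤ y 1 ∧ (∀ i ∈ Icc 2 (N + 1), c ≤ y i)) ∧
    (∀ z : ℕ → ℝ, (∑ i ∈ Icc 1 (N + 1), z i) = T → 0 ≤ z 1 →
      (∀ i ∈ Icc 2 (N + 1), c ≤ z i) →
      (1 / 2) * (∑ i ∈ Icc 1 (N + 1), (y i) ^ 2) + c * (∑ i ∈ Icc 1 N, y i) ≤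
      (1 / 2) * (∑ i ∈ Icc 1 (N + 1), (z i) ^ 2) + c * (∑ i ∈ Icc 1 N, z i)) := by
  have hN1 : (0 : ℝ) < N + 1 := by positivity
  set a := (T + N * c) / (N + 1) with ha
  have hca : 2 * c ≤ a := by rw [ha, le_div_iff₀ hN1]; linarith
  have hyc : ∀ i ∈ Icc 1 N, y i = a - c := fun i hi => by rw [hy i hi, ha]; field_simp; ring
  have hshift := ageShift_eq_of_eq N c y a hyc hylast
  have hsum_shift : ∑ i ∈ Icc 1 (N + 1), y i + N * c = #(Icc 1 (N + 1)) * a := by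
    rw [← sum_ageShift, sum_congr rfl hshift, sum_const, nsmul_eq_mul]
  have hsum : ∑ i ∈ Icc 1 (N + 1), y i = T := by
    rw [Nat.card_Icc, add_tsub_cancel_right, Nat.cast_add, Nat.cast_one, ha,
      mul_div_cancel₀ _ hN1.ne'] at hsum_shift
    linarith
  refine ⟨⟨hsum, ?_, fun i hi => ?_⟩, fun z hz _ _ => ?_⟩
  · rw [hyc 1 (mem_Icc.mpr ⟨le_rfl, hN⟩)]; linarith
  · obtain ⟨hi2, hiN⟩ := mem_Icc.mp hi
    rcases hiN.lt_or_eq with hiN | rfl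
    · rw [hyc i (mem_Icc.mpr ⟨by omega, by omega⟩)]; linarith
    · rw [hylast]; linarith
  rw [objective_eq_sum_sq_ageShift, objective_eq_sum_sq_ageShift,
    sum_congr rfl fun i hi => by rw [hshift i hi], sum_const, nsmul_eq_mul]
  gcongr
  exact card_mul_sq_le_sum_sq _ _ a (by rw [sum_ageShift, hz, ← hsum, hsum_shift])
end

section
/- For Nc < T ≤ (N+2)c with c > 0, the vector y with y_1 = (T-Nc)/2, y_i = c for i = 2,...,N, and y_{N+1} = (T-(N-2)c)/2 minimizes A(y) = (1/2)∑_{i=1}^{N+1} y_i² + c∑_{i=1}^{N} y_i over all y ∈ ℝ^{N+1} satisfying ∑_{i=1}^{N+1} y_i = T, y_1 ≥ 0, and y_i ≥ c for i = 2,...,N+1. -/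
/-!
The objective `A(z) = ½ ∑ zᵢ² + c ∑_{i ≤ N} zᵢ` is a convex quadratic, so
`A(z) - A(y) ≥ ⟪∇A(y), z - y⟫`. At the proposed `y` the gradient is `λ = y_{N+1}` in the two
end coordinates and `2c` in the middle ones. Since `z - y` sums to zero, the pairing equals
`(2c - λ) ∑_{i=2}^{N} (zᵢ - c)`, which is nonnegative because `zᵢ ≥ c` and `λ ≤ 2c`
(this last inequality is `T ≤ (N+2)c`).
-/

open Finset

section Splitting

variable {M : Type*} [AddCommMonoid M] {N : ℕ}

lemma sum_Icc_one_eq_add_sum_Icc_two (hN : 1 ≤ N) (f : ℕ → M) :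
    ∑ i ∈ Icc 1 N, f i = f 1 + ∑ i ∈ Icc 2 N, f i := by
  rw [← add_sum_Ioc_eq_sum_Icc hN, ← Icc_add_one_left_eq_Ioc]
  rfl

lemma sum_Icc_one_succ_eq (hN : 1 ≤ N) (f : ℕ → M) :
    ∑ i ∈ Icc 1 (N + 1), f i = f 1 + ∑ i ∈ Icc 2 N, f i + f (N + 1) := by
  rw [sum_Icc_succ_top (by omega), sum_Icc_one_eq_add_sum_Icc_two hN]

end Splitting

lemma sum_Icc_two_const (N : ℕ) (hN : 1 ≤ N) (a : ℝ) :
    ∑ _i ∈ Icc 2 N, a = ((N : ℝ) - 1) * a := by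
  rw [sum_const, Nat.card_Icc, nsmul_eq_mul, show N + 1 - 2 = N - 1 by omega,
    Nat.cast_sub hN, Nat.cast_one]

/-- The gradient inequality for the convex function `½ ∑_s uᵢ² + c ∑_t uᵢ`. -/
lemma sum_mul_sub_add_le_quadratic {ι : Type*} (s t : Finset ι) (c : ℝ) (y z : ι → ℝ) :
    ∑ i ∈ s, y i * (z i - y i) + c * ∑ i ∈ t, (z i - y i) ≤
      (1 / 2 * ∑ i ∈ s, z i ^ 2 + c * ∑ i ∈ t, z i) -
        (1 / 2 * ∑ i ∈ s, y i ^ 2 + c * ∑ i ∈ t, y i) := by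
  have hs : ∑ i ∈ s, y i * (z i - y i) ≤ ∑ i ∈ s, (1 / 2 * z i ^ 2 - 1 / 2 * y i ^ 2) :=
    sum_le_sum fun i _ => by nlinarith [sq_nonneg (z i - y i)]
  rw [sum_sub_distrib, ← mul_sum, ← mul_sum] at hs
  rw [sum_sub_distrib]
  linarith

lemma gradient_pairing_nonneg (N : ℕ) (hN : 1 ≤ N) (c : ℝ) (y z : ℕ → ℝ)
    (hy_ends : y 1 + c = y (N + 1)) (hy : ∀ i ∈ Icc 2 N, y i = c) (hy_last : y (N + 1) ≤ 2 * c)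
    (hsum : ∑ i ∈ Icc 1 (N + 1), z i = ∑ i ∈ Icc 1 (N + 1), y i)
    (hz : ∀ i ∈ Icc 2 N, c ≤ z i) :
    0 ≤ ∑ i ∈ Icc 1 (N + 1), y i * (z i - y i) + c * ∑ i ∈ Icc 1 N, (z i - y i) := by
  have hmid : ∑ i ∈ Icc 2 N, y i * (z i - y i) = c * ∑ i ∈ Icc 2 N, (z i - y i) := by
    rw [mul_sum]
    exact sum_congr rfl fun i hi => by rw [hy i hi]
  have hmid_nonneg : 0 ≤ ∑ i ∈ Icc 2 N, (z i - y i) :=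
    sum_nonneg fun i hi => by linarith [hy i hi, hz i hi]
  have hzero : z 1 - y 1 + ∑ i ∈ Icc 2 N, (z i - y i) + (z (N + 1) - y (N + 1)) = 0 := by
    rw [← sum_Icc_one_succ_eq hN (fun i => z i - y i), sum_sub_distrib, hsum, sub_self]
  rw [sum_Icc_one_succ_eq hN, sum_Icc_one_eq_add_sum_Icc_two hN, hmid]
  calc 0 ≤ (2 * c - y (N + 1)) * ∑ i ∈ Icc 2 N, (z i - y i) :=
        mul_nonneg (by linarith) hmid_nonneg
    _ = _ := by linear_combination -(z 1 - y 1) * hy_ends - y (N + 1) * hzero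

theorem stmt_1_general (N : ℕ) (hN : 1 ≤ N) (T c : ℝ)
    (hT1 : (N : ℝ) * c < T) (hT2 : T ≤ ((N : ℝ) + 2) * c)
    (y : ℕ → ℝ)
    (hy1 : y 1 = (T - (N : ℝ) * c) / 2)
    (hy : ∀ i ∈ Icc 2 N, y i = c)
    (hylast : y (N + 1) = (T - ((N : ℝ) - 2) * c) / 2) :
    ((∑ i ∈ Icc 1 (N + 1), y i) = T ∧ 0 ≤ y 1 ∧ (∀ i ∈ Icc 2 (N + 1), c ≤ y i)) ∧
    (∀ z : ℕ → ℝ, (∑ i ∈ Icc 1 (N + 1), z i) = T → 0 ≤ z 1 →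
      (∀ i ∈ Icc 2 (N + 1), c ≤ z i) →
      (1 / 2) * (∑ i ∈ Icc 1 (N + 1), (y i) ^ 2) + c * (∑ i ∈ Icc 1 N, y i) ≤
      (1 / 2) * (∑ i ∈ Icc 1 (N + 1), (z i) ^ 2) + c * (∑ i ∈ Icc 1 N, z i)) := by
  have hy_sum : ∑ i ∈ Icc 1 (N + 1), y i = T := by
    rw [sum_Icc_one_succ_eq hN, sum_congr rfl hy, sum_Icc_two_const N hN, hy1, hylast]
    ring
  refine ⟨⟨hy_sum, by rw [hy1]; linarith, fun i hi => ?_⟩, fun z hz_sum _ hz => ?_⟩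
  · rcases eq_or_ne i (N + 1) with rfl | hi_ne
    · rw [hylast]; linarith
    · exact (hy i (by simp only [mem_Icc] at hi ⊢; omega)).ge
  · have hpairing := gradient_pairing_nonneg N hN c y z (by rw [hy1, hylast]; ring) hy
      (by rw [hylast]; linarith) (hz_sum.trans hy_sum.symm)
      (fun i hi => hz i (Icc_subset_Icc_right N.le_succ hi))
    linarith [sum_mul_sub_add_le_quadratic (Icc 1 (N + 1)) (Icc 1 N) c y z]

/-- For Nc < T ≤ (N+2)c with c > 0, the vector y with y_1 = (T-Nc)/2,
y_i = c for i = 2,...,N, and y_{N+1} = (T-(N-2)c)/2 minimizes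
A(y) = (1/2)∑ y_i² + c∑_{i=1}^N y_i over feasible y. -/
theorem stmt_1 (N : ℕ) (hN : 1 ≤ N) (T c : ℝ) (hc : 0 < c)
    (hT1 : (N : ℝ) * c < T) (hT2 : T ≤ ((N : ℝ) + 2) * c)
    (y : ℕ → ℝ)
    (hy1 : y 1 = (T - (N : ℝ) * c) / 2)
    (hy : ∀ i ∈ Icc 2 N, y i = c)
    (hylast : y (N + 1) = (T - ((N : ℝ) - 2) * c) / 2) :
    ((∑ i ∈ Icc 1 (N + 1), y i) = T ∧ 0 ≤ y 1 ∧ (∀ i ∈ Icc 2 (N + 1), c ≤ y i)) ∧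
    (∀ z : ℕ → ℝ, (∑ i ∈ Icc 1 (N + 1), z i) = T → 0 ≤ z 1 →
      (∀ i ∈ Icc 2 (N + 1), c ≤ z i) →
      (1 / 2) * (∑ i ∈ Icc 1 (N + 1), (y i) ^ 2) + c * (∑ i ∈ Icc 1 N, y i) ≤
      (1 / 2) * (∑ i ∈ Icc 1 (N + 1), (z i) ^ 2) + c * (∑ i ∈ Icc 1 N, z i)) :=
  stmt_1_general N hN T c hT1 hT2 y hy1 hy hylast
end

section
/- Let α > 0, T > 0, N ≥ 1. Suppose (y, c) ∈ ℝ^{N+1} × ℝ^N minimizes (1/2)∑_{i=1}^{N+1} y_i² + ∑_{i=1}^{N} c_i y_i subject to ∑_{i=1}^{N+1} y_i = T, y_1 ≥ 0, y_i ≥ c_{i-1} for i = 2,...,N+1, c_i ≥ 0, and c_i ≥ α y_i for i = 1,...,N, with y_i > 0 for all i. Then c_i = α y_i for all i = 1,...,N. -/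
open Finset

/-! If the distortion bound `c j` were slack, lowering it to `α * y j` keeps every constraint
(each `c i` only appears as an upper bound for the next processing time `y (i + 1)`), while the
cost drops by `(c j - α * y j) * y j > 0`; this contradicts optimality. -/

theorem Finset.sum_update_mul_lt {ι : Type*} [DecidableEq ι] {s : Finset ι} {c y : ι → ℝ}
    {j : ι} (hj : j ∈ s) {a : ℝ} (ha : a < c j) (hy : 0 < y j) :
    ∑ i ∈ s, Function.update c j a i * y i < ∑ i ∈ s, c i * y i := by
  refine sum_lt_sum (fun i _ => ?_) ⟨j, hj, by simpa using mul_lt_mul_of_pos_right ha hy⟩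
  rcases eq_or_ne i j with rfl | hij
  · simpa using mul_le_mul_of_nonneg_right ha.le hy.le
  · simp [hij]

namespace AgeDistortion

def IsFeasible (N : ℕ) (α T : ℝ) (z d : ℕ → ℝ) : Prop :=
  (∑ i ∈ Icc 1 (N + 1), z i) = T ∧ 0 ≤ z 1 ∧ (∀ i ∈ Icc 2 (N + 1), d (i - 1) ≤ z i) ∧
    (∀ i ∈ Icc 1 N, 0 ≤ d i) ∧ ∀ i ∈ Icc 1 N, α * z i ≤ d i

noncomputable def cost (N : ℕ) (z d : ℕ → ℝ) : ℝ :=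
  (1 / 2) * (∑ i ∈ Icc 1 (N + 1), (z i) ^ 2) + (∑ i ∈ Icc 1 N, d i * z i)

theorem IsFeasible.update_of_le {N : ℕ} {α T : ℝ} {z d : ℕ → ℝ} (h : IsFeasible N α T z d)
    {j : ℕ} {a : ℝ} (ha₀ : 0 ≤ a) (haα : α * z j ≤ a) (had : a ≤ d j) :
    IsFeasible N α T z (Function.update d j a) := by
  obtain ⟨hsum, hz1, hnext, hd0, hdα⟩ := h
  have hle : ∀ i, Function.update d j a i ≤ d i := fun i => by
    rcases eq_or_ne i j with rfl | hij <;> simp [*]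
  refine ⟨hsum, hz1, fun i hi => (hle _).trans (hnext i hi), fun i hi => ?_, fun i hi => ?_⟩
  all_goals rcases eq_or_ne i j with rfl | hij <;> simp [*]

theorem cost_update_lt {N : ℕ} {z d : ℕ → ℝ} {j : ℕ} (hj : j ∈ Icc 1 N) {a : ℝ} (ha : a < d j)
    (hz : 0 < z j) : cost N z (Function.update d j a) < cost N z d := by
  unfold cost
  linarith [sum_update_mul_lt hj ha hz]

end AgeDistortion

open AgeDistortion in
theorem stmt_5_general (N : ℕ) (α T : ℝ) (hα : 0 < α)
    (y : ℕ → ℝ) (c : ℕ → ℝ)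
    (hsum : (∑ i ∈ Icc 1 (N + 1), y i) = T)
    (hy1 : 0 ≤ y 1)
    (hfeas : ∀ i ∈ Icc 2 (N + 1), c (i - 1) ≤ y i)
    (hc0 : ∀ i ∈ Icc 1 N, 0 ≤ c i)
    (hcα : ∀ i ∈ Icc 1 N, α * y i ≤ c i)
    (hypos : ∀ i ∈ Icc 1 (N + 1), 0 < y i)
    (hopt : ∀ z d : ℕ → ℝ, (∑ i ∈ Icc 1 (N + 1), z i) = T → 0 ≤ z 1 →
      (∀ i ∈ Icc 2 (N + 1), d (i - 1) ≤ z i) →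
      (∀ i ∈ Icc 1 N, 0 ≤ d i) → (∀ i ∈ Icc 1 N, α * z i ≤ d i) →
      (1 / 2) * (∑ i ∈ Icc 1 (N + 1), (y i) ^ 2) + (∑ i ∈ Icc 1 N, c i * y i) ≤
      (1 / 2) * (∑ i ∈ Icc 1 (N + 1), (z i) ^ 2) + (∑ i ∈ Icc 1 N, d i * z i)) :
    ∀ i ∈ Icc 1 N, c i = α * y i := by
  intro j hj
  have hyj : 0 < y j := hypos j (Icc_subset_Icc_right (Nat.le_succ N) hj)
  by_contra hne
  have hslack : α * y j < c j := (hcα j hj).lt_of_ne (Ne.symm hne)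
  obtain ⟨-, -, hnext, hd0, hdα⟩ : IsFeasible N α T y (Function.update c j (α * y j)) :=
    IsFeasible.update_of_le ⟨hsum, hy1, hfeas, hc0, hcα⟩ (by positivity) le_rfl hslack.le
  exact (cost_update_lt hj hslack hyj).not_ge (hopt y _ hsum hy1 hnext hd0 hdα)

/-- Lemma 1: if (y, c) minimizes (1/2)∑ y_i² + ∑ c_i y_i subject to
∑ y_i = T, y_1 ≥ 0, y_i ≥ c_{i-1}, c_i ≥ 0, c_i ≥ α y_i, and y_i > 0 for all i,
then c_i = α y_i for all i = 1,...,N. -/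
theorem stmt_5 (N : ℕ) (hN : 1 ≤ N) (α T : ℝ) (hα : 0 < α) (hT : 0 < T)
    (y : ℕ → ℝ) (c : ℕ → ℝ)
    (hsum : (∑ i ∈ Icc 1 (N + 1), y i) = T)
    (hy1 : 0 ≤ y 1)
    (hfeas : ∀ i ∈ Icc 2 (N + 1), c (i - 1) ≤ y i)
    (hc0 : ∀ i ∈ Icc 1 N, 0 ≤ c i)
    (hcα : ∀ i ∈ Icc 1 N, α * y i ≤ c i)
    (hypos : ∀ i ∈ Icc 1 (N + 1), 0 < y i)
    (hopt : ∀ z d : ℕ → ℝ, (∑ i ∈ Icc 1 (N + 1), z i) = T → 0 ≤ z 1 →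
      (∀ i ∈ Icc 2 (N + 1), d (i - 1) ≤ z i) →
      (∀ i ∈ Icc 1 N, 0 ≤ d i) → (∀ i ∈ Icc 1 N, α * z i ≤ d i) →
      (1 / 2) * (∑ i ∈ Icc 1 (N + 1), (y i) ^ 2) + (∑ i ∈ Icc 1 N, c i * y i) ≤
      (1 / 2) * (∑ i ∈ Icc 1 (N + 1), (z i) ^ 2) + (∑ i ∈ Icc 1 N, d i * z i)) :
    ∀ i ∈ Icc 1 N, c i = α * y i :=
  stmt_5_general N α T hα y c hsum hy1 hfeas hc0 hcα hypos hopt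
end

section
/- For 0 < α < 1 and T > 0, the vector y with y_i = T/(N+2α+1) for i = 1,...,N and y_{N+1} = (2α+1)T/(N+2α+1) minimizes (1/2 + α)∑_{i=1}^{N} y_i² + (1/2)y_{N+1}² over all y ∈ ℝ^{N+1} satisfying ∑_{i=1}^{N+1} y_i = T, y_1 ≥ 0, and y_i ≥ α y_{i-1} for i = 2,...,N+1. -/
open Finset

/-!
The objective is a weighted sum of squares `∑ wᵢ zᵢ²` with nonnegative weights. On the
hyperplane `∑ zᵢ = T` such a convex function is minimized where its gradient `2 wᵢ yᵢ` is
constant, and the proposed schedule satisfies `wᵢ yᵢ = (1/2 + α) T / (N + 2α + 1)` for every `i`.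
That schedule is nondecreasing and nonnegative, so it also meets the constraints `y₁ ≥ 0` and
`yᵢ ≥ α yᵢ₋₁`, which are therefore inactive.
-/

theorem Finset.sum_mul_sq_le_of_mul_eq_const {ι : Type*} (s : Finset ι) (w y z : ι → ℝ)
    (μ : ℝ) (hw : ∀ i ∈ s, 0 ≤ w i) (hwy : ∀ i ∈ s, w i * y i = μ)
    (hsum : ∑ i ∈ s, y i = ∑ i ∈ s, z i) :
    ∑ i ∈ s, w i * y i ^ 2 ≤ ∑ i ∈ s, w i * z i ^ 2 := by
  have tangent : ∀ i ∈ s, w i * y i ^ 2 + 2 * μ * (z i - y i) ≤ w i * z i ^ 2 := by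
    intro i hi
    rw [← hwy i hi]
    nlinarith [mul_nonneg (hw i hi) (sq_nonneg (z i - y i))]
  calc ∑ i ∈ s, w i * y i ^ 2
      = ∑ i ∈ s, (w i * y i ^ 2 + 2 * μ * (z i - y i)) := by
        rw [sum_add_distrib, ← mul_sum, sum_sub_distrib, hsum, sub_self, mul_zero, add_zero]
    _ ≤ ∑ i ∈ s, w i * z i ^ 2 := sum_le_sum tangent

namespace AgeOptimalSchedule

noncomputable def weight (N : ℕ) (α : ℝ) (i : ℕ) : ℝ := if i ≤ N then 1 / 2 + α else 1 / 2

theorem objective_eq_sum_weight_mul_sq (N : ℕ) (α : ℝ) (z : ℕ → ℝ) :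
    (1 / 2 + α) * (∑ i ∈ Icc 1 N, z i ^ 2) + 1 / 2 * z (N + 1) ^ 2 =
      ∑ i ∈ Icc 1 (N + 1), weight N α i * z i ^ 2 := by
  rw [sum_Icc_succ_top (by omega), mul_sum, weight, if_neg (by omega)]
  congr 1
  refine sum_congr rfl fun i hi => ?_
  rw [weight, if_pos (mem_Icc.mp hi).2]

section

variable {N : ℕ} {α T : ℝ} {y : ℕ → ℝ}
  (hy : ∀ i ∈ Icc 1 N, y i = T / (N + 2 * α + 1))
  (hylast : y (N + 1) = (2 * α + 1) * T / (N + 2 * α + 1))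
include hy hylast

theorem sum_eq (hα : 0 < α) : ∑ i ∈ Icc 1 (N + 1), y i = T := by
  rw [sum_Icc_succ_top (by omega), sum_congr rfl hy, sum_const, Nat.card_Icc, nsmul_eq_mul,
    hylast]
  field_simp
  push_cast
  ring

theorem le_of_mem_Icc (hα : 0 ≤ α) (hT : 0 ≤ T) :
    ∀ i ∈ Icc 1 (N + 1), T / (N + 2 * α + 1) ≤ y i := by
  intro i hi
  rcases (mem_Icc.mp hi).2.lt_or_eq with hiN | rfl
  · exact (hy i (mem_Icc.mpr ⟨(mem_Icc.mp hi).1, by omega⟩)).ge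
  · rw [hylast, mul_div_assoc]
    exact le_mul_of_one_le_left (by positivity) (by linarith)

theorem weight_mul_eq :
    ∀ i ∈ Icc 1 (N + 1), weight N α i * y i = (1 / 2 + α) * (T / (N + 2 * α + 1)) := by
  intro i hi
  rcases (mem_Icc.mp hi).2.lt_or_eq with hiN | rfl
  · rw [weight, if_pos (by omega), hy i (mem_Icc.mpr ⟨(mem_Icc.mp hi).1, by omega⟩)]
  · rw [weight, if_neg (by omega), hylast]
    ring

end

end AgeOptimalSchedule

open AgeOptimalSchedule in
theorem stmt_6_general (N : ℕ) (α T : ℝ) (hα0 : 0 < α) (hα1 : α < 1) (hT : 0 < T)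
    (y : ℕ → ℝ)
    (hy : ∀ i ∈ Icc 1 N, y i = T / ((N : ℝ) + 2 * α + 1))
    (hylast : y (N + 1) = (2 * α + 1) * T / ((N : ℝ) + 2 * α + 1)) :
    ((∑ i ∈ Icc 1 (N + 1), y i) = T ∧ 0 ≤ y 1 ∧
      (∀ i ∈ Icc 2 (N + 1), α * y (i - 1) ≤ y i)) ∧
    (∀ z : ℕ → ℝ, (∑ i ∈ Icc 1 (N + 1), z i) = T → 0 ≤ z 1 →
      (∀ i ∈ Icc 2 (N + 1), α * z (i - 1) ≤ z i) →
      (1 / 2 + α) * (∑ i ∈ Icc 1 N, (y i) ^ 2) + (1 / 2) * (y (N + 1)) ^ 2 ≤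
      (1 / 2 + α) * (∑ i ∈ Icc 1 N, (z i) ^ 2) + (1 / 2) * (z (N + 1)) ^ 2) := by
  have hc : 0 ≤ T / (N + 2 * α + 1) := by positivity
  have hle := le_of_mem_Icc hy hylast hα0.le hT.le
  refine ⟨⟨sum_eq hy hylast hα0, hc.trans (hle 1 (by simp)), fun i hi => ?_⟩,
    fun z hz _ _ => ?_⟩
  · have hi' := mem_Icc.mp hi
    calc α * y (i - 1) = α * (T / (N + 2 * α + 1)) := by
          rw [hy (i - 1) (mem_Icc.mpr ⟨by omega, by omega⟩)]
      _ ≤ T / (N + 2 * α + 1) := mul_le_of_le_one_left hc hα1.le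
      _ ≤ y i := hle i (mem_Icc.mpr ⟨by omega, hi'.2⟩)
  · rw [objective_eq_sum_weight_mul_sq, objective_eq_sum_weight_mul_sq]
    refine sum_mul_sq_le_of_mul_eq_const _ _ _ _ _ (fun i _ => ?_) (weight_mul_eq hy hylast)
      (by rw [sum_eq hy hylast hα0, hz])
    unfold weight
    split_ifs <;> linarith

/-- For 0 < α < 1 and T > 0, y_i = T/(N+2α+1) for i = 1,...,N and
y_{N+1} = (2α+1)T/(N+2α+1) minimizes (1/2+α)∑_{i=1}^N y_i² + (1/2)y_{N+1}²
over y with ∑ y_i = T, y_1 ≥ 0, y_i ≥ α y_{i-1} for i = 2,...,N+1. -/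
theorem stmt_6 (N : ℕ) (hN : 1 ≤ N) (α T : ℝ) (hα0 : 0 < α) (hα1 : α < 1) (hT : 0 < T)
    (y : ℕ → ℝ)
    (hy : ∀ i ∈ Icc 1 N, y i = T / ((N : ℝ) + 2 * α + 1))
    (hylast : y (N + 1) = (2 * α + 1) * T / ((N : ℝ) + 2 * α + 1)) :
    ((∑ i ∈ Icc 1 (N + 1), y i) = T ∧ 0 ≤ y 1 ∧
      (∀ i ∈ Icc 2 (N + 1), α * y (i - 1) ≤ y i)) ∧
    (∀ z : ℕ → ℝ, (∑ i ∈ Icc 1 (N + 1), z i) = T → 0 ≤ z 1 →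
      (∀ i ∈ Icc 2 (N + 1), α * z (i - 1) ≤ z i) →
      (1 / 2 + α) * (∑ i ∈ Icc 1 N, (y i) ^ 2) + (1 / 2) * (y (N + 1)) ^ 2 ≤
      (1 / 2 + α) * (∑ i ∈ Icc 1 N, (z i) ^ 2) + (1 / 2) * (z (N + 1)) ^ 2) :=
  stmt_6_general N α T hα0 hα1 hT y hy hylast
end

section
/- Let α > 1, T > 0, N ≥ 2. Any minimizer y of (1/2 + α)∑_{i=1}^{N} y_i² + (1/2)y_{N+1}² over y ∈ ℝ^{N+1} with ∑_{i=1}^{N+1} y_i = T, y_1 ≥ 0, and y_i ≥ α y_{i-1} for i = 2,...,N+1, satisfies y_i = α y_{i-1} for all i = 2,...,N. -/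
/-!
Exchange argument. If some constraint `y k ≥ α y (k-1)` with `2 ≤ k ≤ N` were slack, move a small
amount `ε` from `y k` to `y (k-1)`. The sum is preserved, the constraints survive for `ε` up to the
slack divided by `1 + α`, and the term `y (N+1)` is untouched. The chain of constraints forces
`0 ≤ y (k-1) < y k`, so the quadratic part of the cost changes by `2ε(ε + y (k-1) - y k) < 0`,
contradicting minimality.
-/

open Finset

section Transfer

variable {ι : Type*} [DecidableEq ι]

def transfer (y : ι → ℝ) (a b : ι) (ε : ℝ) : ι → ℝ :=
  fun i => if i = a then y a + ε else if i = b then y b - ε else y i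

variable (y : ι → ℝ) {a b : ι} (ε : ℝ)

@[simp]
lemma transfer_apply_left : transfer y a b ε a = y a + ε := by
  simp [transfer]

@[simp]
lemma transfer_apply_right (hab : a ≠ b) : transfer y a b ε b = y b - ε := by
  simp [transfer, hab.symm]

lemma transfer_apply_of_ne {c : ι} (hca : c ≠ a) (hcb : c ≠ b) : transfer y a b ε c = y c := by
  simp [transfer, hca, hcb]

lemma sum_sub_sum_transfer {s : Finset ι} (g : ℝ → ℝ) (ha : a ∈ s) (hb : b ∈ s) (hab : a ≠ b) :
    ∑ i ∈ s, g (transfer y a b ε i) - ∑ i ∈ s, g (y i) =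
      (g (y a + ε) - g (y a)) + (g (y b - ε) - g (y b)) := by
  rw [← sum_sub_distrib, sum_eq_add_of_mem a b ha hb hab fun c _ hc => by
    rw [transfer_apply_of_ne y ε hc.1 hc.2, sub_self], transfer_apply_left,
    transfer_apply_right y ε hab]

lemma sum_transfer {s : Finset ι} (ha : a ∈ s) (hb : b ∈ s) (hab : a ≠ b) :
    ∑ i ∈ s, transfer y a b ε i = ∑ i ∈ s, y i := by
  have := sum_sub_sum_transfer y ε id ha hb hab
  simp only [id] at this
  linarith

lemma sum_sq_transfer {s : Finset ι} (ha : a ∈ s) (hb : b ∈ s) (hab : a ≠ b) :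
    ∑ i ∈ s, transfer y a b ε i ^ 2 = ∑ i ∈ s, y i ^ 2 + 2 * ε * (ε + y a - y b) := by
  have := sum_sub_sum_transfer y ε (· ^ 2) ha hb hab
  linarith

end Transfer

section Chain

variable {α : ℝ} {y : ℕ → ℝ} {n : ℕ}

lemma chain_nonneg (hα : 0 ≤ α) (hy1 : 0 ≤ y 1) (hchain : ∀ i ∈ Icc 2 n, α * y (i - 1) ≤ y i) :
    ∀ i ∈ Icc 1 n, 0 ≤ y i := by
  intro i hi
  obtain ⟨hi1, hin⟩ := mem_Icc.mp hi
  induction i, hi1 using Nat.le_induction with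
  | base => exact hy1
  | succ m hm ih =>
    have hstep := hchain (m + 1) (mem_Icc.mpr ⟨by omega, hin⟩)
    rw [Nat.add_sub_cancel] at hstep
    exact (mul_nonneg hα (ih (mem_Icc.mpr ⟨hm, by omega⟩) (by omega))).trans hstep

lemma chain_transfer {j : ℕ} {ε : ℝ} (hα : 0 ≤ α) (hε : 0 ≤ ε)
    (hchain : ∀ i ∈ Icc 2 n, α * y (i - 1) ≤ y i)
    (hslack : (1 + α) * ε ≤ y (j + 1) - α * y j) :
    ∀ i ∈ Icc 2 n, α * transfer y j (j + 1) ε (i - 1) ≤ transfer y j (j + 1) ε i := by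
  intro i hi
  obtain ⟨m, rfl⟩ : ∃ m, i = m + 1 := ⟨i - 1, by grind⟩
  have hm := hchain (m + 1) hi
  rw [Nat.add_sub_cancel] at hm ⊢
  simp only [transfer]
  -- only the link from `j` to `j + 1` tightens, and by exactly `(1 + α) * ε`
  split_ifs <;> subst_vars <;> first | omega | nlinarith

end Chain

theorem stmt_7_general (N : ℕ) (α T : ℝ) (hα : 1 < α)
    (y : ℕ → ℝ)
    (hsum : (∑ i ∈ Icc 1 (N + 1), y i) = T)
    (hy1 : 0 ≤ y 1)
    (hfeas : ∀ i ∈ Icc 2 (N + 1), α * y (i - 1) ≤ y i)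
    (hopt : ∀ z : ℕ → ℝ, (∑ i ∈ Icc 1 (N + 1), z i) = T → 0 ≤ z 1 →
      (∀ i ∈ Icc 2 (N + 1), α * z (i - 1) ≤ z i) →
      (1 / 2 + α) * (∑ i ∈ Icc 1 N, (y i) ^ 2) + (1 / 2) * (y (N + 1)) ^ 2 ≤
      (1 / 2 + α) * (∑ i ∈ Icc 1 N, (z i) ^ 2) + (1 / 2) * (z (N + 1)) ^ 2) :
    ∀ i ∈ Icc 2 N, y i = α * y (i - 1) := by
  intro k hk
  obtain ⟨j, rfl, hj1, hjN⟩ : ∃ j, k = j + 1 ∧ 1 ≤ j ∧ j + 1 ≤ N := ⟨k - 1, by grind⟩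
  rw [Nat.add_sub_cancel]
  have hle := hfeas (j + 1) (by grind)
  rw [Nat.add_sub_cancel] at hle
  refine ((lt_or_eq_of_le hle).resolve_left fun hlt => ?_).symm
  have hyj : 0 ≤ y j := chain_nonneg (by linarith) hy1 hfeas j (by grind)
  set ε := (y (j + 1) - α * y j) / (1 + α)
  have hε : 0 < ε := div_pos (by linarith) (by linarith)
  have hslack : (1 + α) * ε = y (j + 1) - α * y j := mul_div_cancel₀ _ (by linarith)
  have hz1 : 0 ≤ transfer y j (j + 1) ε 1 := by
    rcases hj1.eq_or_lt with rfl | hj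
    · rw [transfer_apply_left]; linarith
    · rwa [transfer_apply_of_ne (c := 1) y ε (by omega) (by omega)]
  have hcost := hopt _ (by rw [sum_transfer y ε (by grind) (by grind) (by omega), hsum]) hz1
    (chain_transfer (by linarith) hε.le hfeas hslack.le)
  rw [sum_sq_transfer y ε (by grind) (by grind) (by omega),
    transfer_apply_of_ne (c := N + 1) y ε (by omega) (by omega)] at hcost
  have hgap : 0 < y (j + 1) - y j - ε := by nlinarith
  have hdrop : 0 < (1 / 2 + α) * (2 * ε * (y (j + 1) - y j - ε)) := by positivity
  linarith

/-- Lemma 2: for α > 1, any minimizer y of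
(1/2+α)∑_{i=1}^N y_i² + (1/2)y_{N+1}² subject to ∑ y_i = T, y_1 ≥ 0,
y_i ≥ α y_{i-1} for i = 2,...,N+1, satisfies y_i = α y_{i-1} for i = 2,...,N. -/
theorem stmt_7 (N : ℕ) (hN : 2 ≤ N) (α T : ℝ) (hα : 1 < α) (hT : 0 < T)
    (y : ℕ → ℝ)
    (hsum : (∑ i ∈ Icc 1 (N + 1), y i) = T)
    (hy1 : 0 ≤ y 1)
    (hfeas : ∀ i ∈ Icc 2 (N + 1), α * y (i - 1) ≤ y i)
    (hopt : ∀ z : ℕ → ℝ, (∑ i ∈ Icc 1 (N + 1), z i) = T → 0 ≤ z 1 →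
      (∀ i ∈ Icc 2 (N + 1), α * z (i - 1) ≤ z i) →
      (1 / 2 + α) * (∑ i ∈ Icc 1 N, (y i) ^ 2) + (1 / 2) * (y (N + 1)) ^ 2 ≤
      (1 / 2 + α) * (∑ i ∈ Icc 1 N, (z i) ^ 2) + (1 / 2) * (z (N + 1)) ^ 2) :
    ∀ i ∈ Icc 2 N, y i = α * y (i - 1) :=
  stmt_7_general N α T hα y hsum hy1 hfeas hopt
end

section
/- Let c > 0, 0 < α < 1/2. Suppose (y, c') ∈ ℝ^{N+1} × ℝ^N minimizes (1/2)∑_{i=1}^{N+1} y_i² + ∑_{i=1}^{N} c'_i y_i subject to ∑_{i=1}^{N+1} y_i = T, y_1 ≥ 0, y_i ≥ c'_{i-1} for i = 2,...,N+1, c'_i ≥ 0, and c'_i ≥ c − α y_i for i = 1,...,N, with y_i > 0 for all i. Then c'_i = max(c − α y_i, 0) for all i = 1,...,N. -/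
/-!
Keep the ages `y` fixed and lower the single distortion `c'_j` to its smallest admissible value
`max (c - α y_j) 0`. All constraints stay satisfied (the coupling `c'_{i-1} ≤ y_i` only gets
easier), and the objective drops by `(c'_j - max (c - α y_j) 0) * y_j`. Optimality and `y_j > 0`
force this drop to vanish.
-/

open Finset Function

theorem Finset.sum_update_mul {ι R : Type*} [CommRing R] [DecidableEq ι] {s : Finset ι} {j : ι}
    (hj : j ∈ s) (f g : ι → R) (b : R) :
    ∑ i ∈ s, update f j b i * g i = ∑ i ∈ s, f i * g i + (b - f j) * g j := by
  rw [← sub_eq_iff_eq_add', ← sum_sub_distrib, sum_eq_single_of_mem j hj]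
  · simp only [update_self]
    ring
  · intro i _ hij
    simp only [update_of_ne hij, sub_self]

def DistortionFeasible (N : ℕ) (α c : ℝ) (z d : ℕ → ℝ) : Prop :=
  (∀ i ∈ Icc 2 (N + 1), d (i - 1) ≤ z i) ∧ (∀ i ∈ Icc 1 N, 0 ≤ d i) ∧
    ∀ i ∈ Icc 1 N, c - α * z i ≤ d i

theorem DistortionFeasible.max_le {N : ℕ} {α c : ℝ} {z d : ℕ → ℝ}
    (h : DistortionFeasible N α c z d) {j : ℕ} (hj : j ∈ Icc 1 N) :
    max (c - α * z j) 0 ≤ d j :=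
  _root_.max_le (h.2.2 j hj) (h.2.1 j hj)

theorem DistortionFeasible.update_max {N : ℕ} {α c : ℝ} {z d : ℕ → ℝ}
    (h : DistortionFeasible N α c z d) {j : ℕ} (hj : j ∈ Icc 1 N) :
    DistortionFeasible N α c z (update d j (max (c - α * z j) 0)) := by
  have hle : update d j (max (c - α * z j) 0) ≤ d := update_le_self_iff.2 (h.max_le hj)
  obtain ⟨hcouple, hnonneg, hlower⟩ := h
  refine ⟨fun i hi => (hle _).trans (hcouple i hi), fun i hi => ?_, fun i hi => ?_⟩
  · rcases eq_or_ne i j with rfl | hij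
    · simp
    · simpa [update_of_ne hij] using hnonneg i hi
  · rcases eq_or_ne i j with rfl | hij
    · simp
    · simpa [update_of_ne hij] using hlower i hi

theorem stmt_9_general (N : ℕ) (α c T : ℝ)
    (y : ℕ → ℝ) (c' : ℕ → ℝ)
    (hsum : (∑ i ∈ Icc 1 (N + 1), y i) = T)
    (hy1 : 0 ≤ y 1)
    (hfeas : ∀ i ∈ Icc 2 (N + 1), c' (i - 1) ≤ y i)
    (hc0 : ∀ i ∈ Icc 1 N, 0 ≤ c' i)
    (hcα : ∀ i ∈ Icc 1 N, c - α * y i ≤ c' i)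
    (hypos : ∀ i ∈ Icc 1 (N + 1), 0 < y i)
    (hopt : ∀ z d : ℕ → ℝ, (∑ i ∈ Icc 1 (N + 1), z i) = T → 0 ≤ z 1 →
      (∀ i ∈ Icc 2 (N + 1), d (i - 1) ≤ z i) →
      (∀ i ∈ Icc 1 N, 0 ≤ d i) → (∀ i ∈ Icc 1 N, c - α * z i ≤ d i) →
      (1 / 2) * (∑ i ∈ Icc 1 (N + 1), (y i) ^ 2) + (∑ i ∈ Icc 1 N, c' i * y i) ≤
      (1 / 2) * (∑ i ∈ Icc 1 (N + 1), (z i) ^ 2) + (∑ i ∈ Icc 1 N, d i * z i)) :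
    ∀ i ∈ Icc 1 N, c' i = max (c - α * y i) 0 := by
  intro j hj
  have hfeasible : DistortionFeasible N α c y c' := ⟨hfeas, hc0, hcα⟩
  obtain ⟨hcouple, hnonneg, hlower⟩ := hfeasible.update_max hj
  have hopt_j := hopt y _ hsum hy1 hcouple hnonneg hlower
  rw [sum_update_mul hj] at hopt_j
  have hyj : 0 < y j := hypos j (Icc_subset_Icc_right N.le_succ hj)
  have hdrop : 0 ≤ max (c - α * y j) 0 - c' j :=
    nonneg_of_mul_nonneg_left (by linarith) hyj
  exact le_antisymm (by linarith) (hfeasible.max_le hj)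

/-- Lemma 3: if (y, c') minimizes (1/2)∑ y_i² + ∑ c'_i y_i subject to
∑ y_i = T, y_1 ≥ 0, y_i ≥ c'_{i-1}, c'_i ≥ 0, c'_i ≥ c − α y_i, with y_i > 0 for all i,
then c'_i = max(c − α y_i, 0) for all i = 1,...,N. -/
theorem stmt_9 (N : ℕ) (hN : 1 ≤ N) (α c T : ℝ) (hc : 0 < c)
    (hα0 : 0 < α) (hα1 : α < 1 / 2)
    (y : ℕ → ℝ) (c' : ℕ → ℝ)
    (hsum : (∑ i ∈ Icc 1 (N + 1), y i) = T)
    (hy1 : 0 ≤ y 1)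
    (hfeas : ∀ i ∈ Icc 2 (N + 1), c' (i - 1) ≤ y i)
    (hc0 : ∀ i ∈ Icc 1 N, 0 ≤ c' i)
    (hcα : ∀ i ∈ Icc 1 N, c - α * y i ≤ c' i)
    (hypos : ∀ i ∈ Icc 1 (N + 1), 0 < y i)
    (hopt : ∀ z d : ℕ → ℝ, (∑ i ∈ Icc 1 (N + 1), z i) = T → 0 ≤ z 1 →
      (∀ i ∈ Icc 2 (N + 1), d (i - 1) ≤ z i) →
      (∀ i ∈ Icc 1 N, 0 ≤ d i) → (∀ i ∈ Icc 1 N, c - α * z i ≤ d i) →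
      (1 / 2) * (∑ i ∈ Icc 1 (N + 1), (y i) ^ 2) + (∑ i ∈ Icc 1 N, c' i * y i) ≤
      (1 / 2) * (∑ i ∈ Icc 1 (N + 1), (z i) ^ 2) + (∑ i ∈ Icc 1 N, d i * z i)) :
    ∀ i ∈ Icc 1 N, c' i = max (c - α * y i) 0 :=
  stmt_9_general N α c T y c' hsum hy1 hfeas hc0 hcα hypos hopt
end

section
/- For 0 < α < 1/2, c > 0, and ((N+2−α)/(1+α))c < T < ((N+1−α)/α)c, the vector y with y_i = (T−c)/(N+1−2α) for i = 1,...,N and y_{N+1} = ((1−2α)T + Nc)/(N+1−2α) minimizes (1/2 − α)∑_{i=1}^{N} y_i² + c∑_{i=1}^{N} y_i + (1/2)y_{N+1}² over all y ∈ ℝ^{N+1} satisfying ∑_{i=1}^{N+1} y_i = T, y_1 ≥ 0, and y_i ≥ c − α y_{i-1} for i = 2,...,N+1. -/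
open Finset

/-!
The candidate has the form `y_i = u` for `i ≤ N` and `y_{N+1} = (1 - 2α) u + c` with
`u = (T - c) / (N + 1 - 2α)`. Each summand of the objective is convex (this is where `α < 1/2`
enters) and its derivative at the candidate, `(1 - 2α) u + c` resp. `y_{N+1}`, is the same
number `λ = y_{N+1}`. So every summand lies above its tangent line of common slope `λ`, and
summing these tangent inequalities over a vector `z` with the same total `T` shows that no such `z`
does better, whether or not it satisfies the remaining constraints. The lower bound on `T` is
exactly `(1 + α) u > c`, which makes the candidate itself feasible.
-/

theorem quadratic_tangent_le {a : ℝ} (ha : 0 ≤ a) (b y t : ℝ) :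
    a * y ^ 2 + b * y + (2 * a * y + b) * (t - y) ≤ a * t ^ 2 + b * t := by
  nlinarith [mul_nonneg ha (sq_nonneg (t - y))]

theorem sum_le_sum_of_common_tangent_slope {ι : Type*} (s : Finset ι) (f : ι → ℝ → ℝ)
    (slope : ℝ) {y z : ι → ℝ} (hf : ∀ i ∈ s, ∀ t, f i (y i) + slope * (t - y i) ≤ f i t)
    (hsum : ∑ i ∈ s, y i = ∑ i ∈ s, z i) :
    ∑ i ∈ s, f i (y i) ≤ ∑ i ∈ s, f i (z i) :=
  calc ∑ i ∈ s, f i (y i)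
      = ∑ i ∈ s, f i (y i) + slope * (∑ i ∈ s, z i - ∑ i ∈ s, y i) := by
        rw [hsum, sub_self, mul_zero, add_zero]
    _ = ∑ i ∈ s, (f i (y i) + slope * (z i - y i)) := by
        rw [sum_add_distrib, ← mul_sum, sum_sub_distrib]
    _ ≤ ∑ i ∈ s, f i (z i) := sum_le_sum fun i hi => hf i hi (z i)

noncomputable section

namespace AgeSchedule

variable (N : ℕ) (α c : ℝ)

def objective (z : ℕ → ℝ) : ℝ :=
  (1 / 2 - α) * (∑ i ∈ Icc 1 N, (z i) ^ 2) + c * (∑ i ∈ Icc 1 N, z i) + (1 / 2) * (z (N + 1)) ^ 2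

def cost (i : ℕ) (t : ℝ) : ℝ :=
  if i ≤ N then (1 / 2 - α) * t ^ 2 + c * t else (1 / 2) * t ^ 2

theorem objective_eq_sum_cost (z : ℕ → ℝ) :
    objective N α c z = ∑ i ∈ Icc 1 (N + 1), cost N α c i (z i) := by
  rw [objective, sum_Icc_succ_top (by omega), mul_sum, mul_sum, ← sum_add_distrib]
  congr 1
  · exact sum_congr rfl fun i hi => by rw [cost, if_pos (mem_Icc.1 hi).2]
  · rw [cost, if_neg (by omega)]

variable {N α c} {u : ℝ} {y : ℕ → ℝ}
  (hy : ∀ i ∈ Icc 1 N, y i = u) (hlast : y (N + 1) = (1 - 2 * α) * u + c)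
include hy hlast

theorem sum_eq : ∑ i ∈ Icc 1 (N + 1), y i = ((N : ℝ) + 1 - 2 * α) * u + c := by
  rw [sum_Icc_succ_top (by omega), sum_congr rfl hy, sum_const, Nat.card_Icc, nsmul_eq_mul,
    hlast]
  push_cast
  ring

theorem cost_tangent (hα : α ≤ 1 / 2) :
    ∀ i ∈ Icc 1 (N + 1), ∀ t, cost N α c i (y i) + y (N + 1) * (t - y i) ≤ cost N α c i t := by
  intro i hi t
  unfold cost
  split_ifs with hiN
  · have hslope : y (N + 1) = 2 * (1 / 2 - α) * y i + c := by
      rw [hlast, hy i (mem_Icc.2 ⟨(mem_Icc.1 hi).1, hiN⟩)]; ring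
    rw [hslope]
    exact quadratic_tangent_le (by linarith) c (y i) t
  · obtain rfl : i = N + 1 := by simp only [mem_Icc] at hi; omega
    linarith [quadratic_tangent_le (by norm_num : (0 : ℝ) ≤ 1 / 2) 0 (y (N + 1)) t]

theorem objective_le (hα : α ≤ 1 / 2) {z : ℕ → ℝ}
    (hz : ∑ i ∈ Icc 1 (N + 1), z i = ∑ i ∈ Icc 1 (N + 1), y i) :
    objective N α c y ≤ objective N α c z := by
  rw [objective_eq_sum_cost, objective_eq_sum_cost]
  exact sum_le_sum_of_common_tangent_slope _ _ _ (cost_tangent hy hlast hα) hz.symm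

theorem feasible (hα0 : 0 < α) (hα1 : α ≤ 1 / 2) (hc : 0 ≤ c) (hu : c < (1 + α) * u) :
    0 ≤ y 1 ∧ ∀ i ∈ Icc 2 (N + 1), c - α * y (i - 1) ≤ y i := by
  have hu0 : 0 < u := by nlinarith
  refine ⟨?_, fun i hi => ?_⟩
  · rcases N.eq_zero_or_pos with rfl | hN
    · rw [hlast]; nlinarith
    · rw [hy 1 (mem_Icc.2 ⟨le_rfl, hN⟩)]; exact hu0.le
  · simp only [mem_Icc] at hi
    rw [hy (i - 1) (mem_Icc.2 ⟨by omega, by omega⟩)]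
    rcases hi.2.lt_or_eq with hiN | rfl
    · rw [hy i (mem_Icc.2 ⟨by omega, by omega⟩)]; linarith
    · rw [hlast]; nlinarith

end AgeSchedule

end

theorem stmt_10_general (N : ℕ) (α c T : ℝ) (hα0 : 0 < α) (hα1 : α < 1 / 2)
    (hc : 0 < c)
    (hT1 : (((N : ℝ) + 2 - α) / (1 + α)) * c < T)
    (y : ℕ → ℝ)
    (hy : ∀ i ∈ Icc 1 N, y i = (T - c) / ((N : ℝ) + 1 - 2 * α))
    (hylast : y (N + 1) = ((1 - 2 * α) * T + (N : ℝ) * c) / ((N : ℝ) + 1 - 2 * α)) :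
    ((∑ i ∈ Icc 1 (N + 1), y i) = T ∧ 0 ≤ y 1 ∧
      (∀ i ∈ Icc 2 (N + 1), c - α * y (i - 1) ≤ y i)) ∧
    (∀ z : ℕ → ℝ, (∑ i ∈ Icc 1 (N + 1), z i) = T → 0 ≤ z 1 →
      (∀ i ∈ Icc 2 (N + 1), c - α * z (i - 1) ≤ z i) →
      (1 / 2 - α) * (∑ i ∈ Icc 1 N, (y i) ^ 2) + c * (∑ i ∈ Icc 1 N, y i) +
          (1 / 2) * (y (N + 1)) ^ 2 ≤
        (1 / 2 - α) * (∑ i ∈ Icc 1 N, (z i) ^ 2) + c * (∑ i ∈ Icc 1 N, z i) +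
          (1 / 2) * (z (N + 1)) ^ 2) := by
  set u := (T - c) / ((N : ℝ) + 1 - 2 * α) with hu_def
  have hD : (0 : ℝ) < (N : ℝ) + 1 - 2 * α := by
    linarith [(N.cast_nonneg : (0 : ℝ) ≤ N)]
  have hlast : y (N + 1) = (1 - 2 * α) * u + c := by
    rw [hylast, hu_def]; field_simp; ring
  have hsum : ∑ i ∈ Icc 1 (N + 1), y i = T := by
    rw [AgeSchedule.sum_eq hy hlast, hu_def]; field_simp; ring
  have hu : c < (1 + α) * u := by
    rw [div_mul_eq_mul_div, div_lt_iff₀ (by linarith)] at hT1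
    rw [← mul_div_assoc, lt_div_iff₀ hD]
    linarith
  refine ⟨⟨hsum, AgeSchedule.feasible hy hlast hα0 hα1.le hc.le hu⟩, fun z hz _ _ => ?_⟩
  exact AgeSchedule.objective_le hy hlast hα1.le (hz.trans hsum.symm)

/-- For 0 < α < 1/2, c > 0, ((N+2−α)/(1+α))c < T < ((N+1−α)/α)c,
the vector y with y_i = (T−c)/(N+1−2α) for i = 1,...,N and
y_{N+1} = ((1−2α)T + Nc)/(N+1−2α) minimizes
(1/2 − α)∑_{i=1}^N y_i² + c∑_{i=1}^N y_i + (1/2)y_{N+1}² over feasible y. -/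
theorem stmt_10 (N : ℕ) (hN : 1 ≤ N) (α c T : ℝ) (hα0 : 0 < α) (hα1 : α < 1 / 2)
    (hc : 0 < c)
    (hT1 : (((N : ℝ) + 2 - α) / (1 + α)) * c < T)
    (hT2 : T < (((N : ℝ) + 1 - α) / α) * c)
    (y : ℕ → ℝ)
    (hy : ∀ i ∈ Icc 1 N, y i = (T - c) / ((N : ℝ) + 1 - 2 * α))
    (hylast : y (N + 1) = ((1 - 2 * α) * T + (N : ℝ) * c) / ((N : ℝ) + 1 - 2 * α)) :
    ((∑ i ∈ Icc 1 (N + 1), y i) = T ∧ 0 ≤ y 1 ∧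
      (∀ i ∈ Icc 2 (N + 1), c - α * y (i - 1) ≤ y i)) ∧
    (∀ z : ℕ → ℝ, (∑ i ∈ Icc 1 (N + 1), z i) = T → 0 ≤ z 1 →
      (∀ i ∈ Icc 2 (N + 1), c - α * z (i - 1) ≤ z i) →
      (1 / 2 - α) * (∑ i ∈ Icc 1 N, (y i) ^ 2) + c * (∑ i ∈ Icc 1 N, y i) +
          (1 / 2) * (y (N + 1)) ^ 2 ≤
        (1 / 2 - α) * (∑ i ∈ Icc 1 N, (z i) ^ 2) + c * (∑ i ∈ Icc 1 N, z i) +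
          (1 / 2) * (z (N + 1)) ^ 2) :=
  stmt_10_general N α c T hα0 hα1 hc hT1 y hy hylast
end

section
/- For α = 1 and T > 0, the vector y with y_i = T/(N+3) for i = 1,...,N and y_{N+1} = 3T/(N+3) minimizes (3/2)∑_{i=1}^{N} y_i² + (1/2)y_{N+1}² over all y ∈ ℝ^{N+1} satisfying ∑_{i=1}^{N+1} y_i = T, y_1 ≥ 0, and y_i ≥ y_{i-1} for i = 2,...,N+1, and it satisfies y_i = y_{i-1} for i = 2,...,N with equality. -/
open Finset

/-!
With `a = T / (N + 3)` the candidate is `y = (a, …, a, 3a)`. The tangent-line bounds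
`z² ≥ 2az - a²` (first `N` coordinates) and `z² ≥ 6az - 9a²` (last one) combine, with the
weights `3/2` and `1/2`, into `3a · ∑ zᵢ` minus a constant, so the cost is bounded below by
a function of `∑ zᵢ = T` alone, which `y` attains. So `y` is optimal even without the order
constraints.
-/

lemma two_mul_sum_sub_card_mul_sq_le_sum_sq {ι : Type*} (s : Finset ι) (a : ℝ) (z : ι → ℝ) :
    2 * a * ∑ i ∈ s, z i - #s * a ^ 2 ≤ ∑ i ∈ s, z i ^ 2 := by
  have hlin : 2 * a * ∑ i ∈ s, z i - #s * a ^ 2 = ∑ i ∈ s, (2 * a * z i - a ^ 2) := by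
    rw [sum_sub_distrib, mul_sum, sum_const, nsmul_eq_mul]
  rw [hlin]
  exact sum_le_sum fun i _ => by nlinarith [sq_nonneg (z i - a)]

lemma cost_ge_of_sum_eq (N : ℕ) (a : ℝ) (z : ℕ → ℝ)
    (hz : ∑ i ∈ Icc 1 (N + 1), z i = ((N : ℝ) + 3) * a) :
    (3 / 2) * ((N : ℝ) + 3) * a ^ 2 ≤
      (3 / 2) * (∑ i ∈ Icc 1 N, z i ^ 2) + (1 / 2) * z (N + 1) ^ 2 := by
  rw [sum_Icc_succ_top (Nat.le_add_left 1 N)] at hz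
  have hfirst := two_mul_sum_sub_card_mul_sq_le_sum_sq (Icc 1 N) a z
  rw [Nat.card_Icc, Nat.add_sub_cancel] at hfirst
  have hscaled := congrArg (3 * a * ·) hz
  nlinarith [sq_nonneg (z (N + 1) - 3 * a)]

theorem stmt_18_general (N : ℕ) (T : ℝ) (hT : 0 < T)
    (y : ℕ → ℝ)
    (hy : ∀ i ∈ Icc 1 N, y i = T / ((N : ℝ) + 3))
    (hylast : y (N + 1) = 3 * T / ((N : ℝ) + 3)) :
    ((∑ i ∈ Icc 1 (N + 1), y i) = T ∧ 0 ≤ y 1 ∧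
      (∀ i ∈ Icc 2 (N + 1), y (i - 1) ≤ y i)) ∧
    (∀ z : ℕ → ℝ, (∑ i ∈ Icc 1 (N + 1), z i) = T → 0 ≤ z 1 →
      (∀ i ∈ Icc 2 (N + 1), z (i - 1) ≤ z i) →
      (3 / 2) * (∑ i ∈ Icc 1 N, (y i) ^ 2) + (1 / 2) * (y (N + 1)) ^ 2 ≤
      (3 / 2) * (∑ i ∈ Icc 1 N, (z i) ^ 2) + (1 / 2) * (z (N + 1)) ^ 2) ∧
    (∀ i ∈ Icc 2 N, y i = y (i - 1)) := by
  set a := T / ((N : ℝ) + 3) with ha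
  have ha0 : 0 ≤ a := by positivity
  have hTa : T = ((N : ℝ) + 3) * a := by rw [ha]; field_simp
  have hylast' : y (N + 1) = 3 * a := by rw [hylast, mul_div_assoc]
  have hy_sum : ∑ i ∈ Icc 1 (N + 1), y i = T := by
    rw [sum_Icc_succ_top (Nat.le_add_left 1 N), sum_congr rfl hy, sum_const, Nat.card_Icc,
      nsmul_eq_mul, hylast', hTa]
    push_cast
    ring
  have hy_cost : (3 / 2) * (∑ i ∈ Icc 1 N, y i ^ 2) + (1 / 2) * y (N + 1) ^ 2
      = (3 / 2) * ((N : ℝ) + 3) * a ^ 2 := by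
    rw [sum_congr rfl fun i hi => by rw [hy i hi], sum_const, Nat.card_Icc, nsmul_eq_mul,
      hylast']
    push_cast
    ring
  have hy_ge : ∀ i ∈ Icc 1 (N + 1), a ≤ y i := by
    intro i hi
    rcases (mem_Icc.mp hi).2.lt_or_eq with hlt | rfl
    · exact (hy i (mem_Icc.mpr ⟨(mem_Icc.mp hi).1, by omega⟩)).ge
    · rw [hylast']; linarith
  have hy_pred : ∀ i ∈ Icc 2 (N + 1), y (i - 1) = a := fun i hi =>
    hy (i - 1) (mem_Icc.mpr (by have := mem_Icc.mp hi; omega))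
  refine ⟨⟨hy_sum, ha0.trans (hy_ge 1 (by simp)), fun i hi => ?_⟩, ?_, fun i hi => ?_⟩
  · rw [hy_pred i hi]
    exact hy_ge i (mem_Icc.mpr (by have := mem_Icc.mp hi; omega))
  · intro z hz _ _
    rw [hy_cost]
    exact cost_ge_of_sum_eq N a z (hz.trans hTa)
  · rw [hy_pred i (mem_Icc.mpr (by have := mem_Icc.mp hi; omega))]
    exact hy i (mem_Icc.mpr (by have := mem_Icc.mp hi; omega))

/-- For α = 1 and T > 0, the vector y with y_i = T/(N+3) for i = 1,...,N
and y_{N+1} = 3T/(N+3) minimizes (3/2)∑_{i=1}^N y_i² + (1/2)y_{N+1}² over all y with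
∑ y_i = T, y_1 ≥ 0, y_i ≥ y_{i-1} for i = 2,...,N+1; moreover y_i = y_{i-1}
for i = 2,...,N. -/
theorem stmt_18 (N : ℕ) (hN : 1 ≤ N) (T : ℝ) (hT : 0 < T)
    (y : ℕ → ℝ)
    (hy : ∀ i ∈ Icc 1 N, y i = T / ((N : ℝ) + 3))
    (hylast : y (N + 1) = 3 * T / ((N : ℝ) + 3)) :
    ((∑ i ∈ Icc 1 (N + 1), y i) = T ∧ 0 ≤ y 1 ∧
      (∀ i ∈ Icc 2 (N + 1), y (i - 1) ≤ y i)) ∧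
    (∀ z : ℕ → ℝ, (∑ i ∈ Icc 1 (N + 1), z i) = T → 0 ≤ z 1 →
      (∀ i ∈ Icc 2 (N + 1), z (i - 1) ≤ z i) →
      (3 / 2) * (∑ i ∈ Icc 1 N, (y i) ^ 2) + (1 / 2) * (y (N + 1)) ^ 2 ≤
      (3 / 2) * (∑ i ∈ Icc 1 N, (z i) ^ 2) + (1 / 2) * (z (N + 1)) ^ 2) ∧
    (∀ i ∈ Icc 2 N, y i = y (i - 1)) :=
  stmt_18_general N T hT y hy hylast
end
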